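/- For every n and all (x_1,…,x_n) ∈ ℕ^n, K_n(x_1,…,x_n) < C(n + s_n, n), where s_n = x_1 + ⋯ + x_n; hence the value of the generalized Cantor n-tupling function is bounded polynomially (with degree n) in the sum of its arguments. -/

import Mathlib

/-!
Splitting off the last summand gives `K_{n+1}(x) = K_n(x_1,…,x_n) + C(n + s_{n+1}, n+1)`.
By induction `K_n(x_1,…,x_n) < C(n + s_n, n) ≤ C(n + s_{n+1}, n)`, and Pascal's rule
`C(m, n) + C(m, n+1) = C(m+1, n+1)` with `m = n + s_{n+1}` closes the step.
-/

/-- The generalized Cantor n-tupling function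
`K_n(x_1,…,x_n) = Σ_{k=1}^n C(k-1+s_k, k)` where `s_k = x_1 + ⋯ + x_k`. -/
def cantorTuple (n : ℕ) (x : Fin n → ℕ) : ℕ :=
  ∑ k : Fin n, Nat.choose (k.val + ∑ i : Fin n, if i ≤ k then x i else 0) (k.val + 1)

lemma cantorTuple_succ (n : ℕ) (x : Fin (n + 1) → ℕ) :
    cantorTuple (n + 1) x =
      cantorTuple n (x ∘ Fin.castSucc) + Nat.choose (n + ∑ i, x i) (n + 1) := by
  simp [cantorTuple, Fin.sum_univ_castSucc, Fin.le_last]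

theorem cantorTuple_lt_choose (n : ℕ) (x : Fin n → ℕ) :
    cantorTuple n x < Nat.choose (n + ∑ i : Fin n, x i) n := by
  induction n with
  | zero => simp [cantorTuple]
  | succ n ih =>
    set s := ∑ i, x i
    have prefix_sum_le : ∑ i : Fin n, x i.castSucc ≤ s := by
      simp only [s, Fin.sum_univ_castSucc]
      exact Nat.le_add_right _ _
    calc cantorTuple (n + 1) x
        = cantorTuple n (x ∘ Fin.castSucc) + Nat.choose (n + s) (n + 1) := cantorTuple_succ n x
      _ < Nat.choose (n + ∑ i : Fin n, x i.castSucc) n + Nat.choose (n + s) (n + 1) :=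
        Nat.add_lt_add_right (ih _) _
      _ ≤ Nat.choose (n + s) n + Nat.choose (n + s) (n + 1) := by gcongr
      _ = Nat.choose (n + 1 + s) (n + 1) := by
        rw [Nat.add_right_comm, Nat.choose_succ_succ']
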